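/- For every integer k ≥ 1, a word w over the alphabet {U, D, L} is a k-box path (of some size n ≥ 1) if and only if there exist augmented (k+1)-Dyck paths μ_1, μ_2, …, μ_{k+1} (each possibly empty) such that w = μ_1 U μ_2 U ⋯ μ_{k+1} U D^k L. -/

import Mathlib

/-- The step alphabet for skew Dyck paths: up, down, left. -/
inductive Step : Type
  | U | D | L
  deriving DecidableEq

/-- Number of U steps in a word. -/
def countU (w : List Step) : ℕ := w.count Step.U
/-- Number of D steps in a word. -/
def countD (w : List Step) : ℕ := w.count Step.D
/-- Number of L steps in a word. -/
def countL (w : List Step) : ℕ := w.count Step.L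

/-- A skew Dyck path: every prefix has at least as many U's as D's and L's combined,
the totals balance, and there is no factor `UL` or `LU`. -/
def IsSkewDyck (w : List Step) : Prop :=
  (∀ p, p <+: w → countD p + countL p ≤ countU p) ∧
  countU w = countD w + countL w ∧
  ¬ [Step.U, Step.L] <:+: w ∧ ¬ [Step.L, Step.U] <:+: w

/-- The semilength of a skew Dyck path is its number of U's. -/
def semilength (w : List Step) : ℕ := countU w

/-- The factor `U D^k L`. -/
def boxFactor (k : ℕ) : List Step := Step.U :: (List.replicate k Step.D ++ [Step.L])

/-- The number of occurrences (starting positions) of `f` as a factor (contiguous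
subword) of `w`. -/
def numOccurrences (f w : List Step) : ℕ :=
  ((Finset.range (w.length + 1)).filter (fun i => f <+: w.drop i)).card

/-- A `k`-box path of size `n`: a skew Dyck path of semilength `(k+2)n - 1` with
exactly `n` occurrences of the factor `U D^k L`. -/
def IsBoxPath (k n : ℕ) (w : List Step) : Prop :=
  IsSkewDyck w ∧ semilength w = (k+2)*n - 1 ∧ numOccurrences (boxFactor k) w = n

/-- Number of returns: positions `i` such that the `(i+1)`-st letter is a `D` or `L`
and the prefix of length `i+1` is balanced (the path returns to the x-axis). -/
def numReturns (w : List Step) : ℕ :=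
  ((Finset.range w.length).filter (fun i =>
    (w[i]? = some Step.D ∨ w[i]? = some Step.L) ∧
    countU (w.take (i+1)) = countD (w.take (i+1)) + countL (w.take (i+1)))).card

/-- Number of long ascents: maximal runs of consecutive U's of length at least 2,
counted via their starting positions. -/
def numLongAscents (w : List Step) : ℕ :=
  ((Finset.range w.length).filter (fun i =>
    w[i]? = some Step.U ∧ w[i+1]? = some Step.U ∧
    (i = 0 ∨ w[i-1]? ≠ some Step.U))).card

/-- The word `U^{a_1} D^k L D U^{a_2} D^k L D ⋯ U^{a_{n-1}} D^k L D U^{a_n} D^k L`. -/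
def boxForm (k : ℕ) : List ℕ → List Step
  | [] => []
  | [a] => List.replicate a Step.U ++ List.replicate k Step.D ++ [Step.L]
  | a :: b :: rest =>
      List.replicate a Step.U ++ List.replicate k Step.D ++ [Step.L, Step.D] ++
        boxForm k (b :: rest)

/-- A block `U^b D^{k-1} L D` of an augmented `k`-Dyck path. -/
def augBlock (k b : ℕ) : List Step :=
  List.replicate b Step.U ++ List.replicate (k-1) Step.D ++ [Step.L, Step.D]

/-- The word `U^{b_1} D^{k-1} L D ⋯ U^{b_m} D^{k-1} L D`. -/
def augForm (k : ℕ) (b : List ℕ) : List Step := (b.map (augBlock k)).flatten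

/-- An augmented `k`-Dyck path: a skew Dyck path of the form
`U^{b_1} D^{k-1} L D ⋯ U^{b_m} D^{k-1} L D` with all `b_i` positive. -/
def IsAugmented (k : ℕ) (w : List Step) : Prop :=
  IsSkewDyck w ∧ ∃ b : List ℕ, (∀ x ∈ b, 0 < x) ∧ w = augForm k b

/-- An augmented `k`-Dyck path of size `m`. -/
def IsAugmentedOfSize (k m : ℕ) (w : List Step) : Prop :=
  IsSkewDyck w ∧ ∃ b : List ℕ, b.length = m ∧ (∀ x ∈ b, 0 < x) ∧ w = augForm k b

/-- A tailed `k`-box path ends with the factor `U^{k+1} D^k L`. -/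
def Tailed (k : ℕ) (w : List Step) : Prop :=
  (List.replicate (k+1) Step.U ++ List.replicate k Step.D ++ [Step.L]) <:+ w


/-!
In a word without factor `LU`, every occurrence of `U D^k L` except a final one is followed by
a further down step, so `n` occurrences need at least `(k+2)n - 1` down steps. A `k`-box path of
size `n` has exactly that many, which forces the shape `U^{a_1} D^k L D ⋯ U^{a_n} D^k L`.
Dropping the final `D^k L` leaves a path from height `0` to height `k+1` that never goes below
`0`; cutting it after its last visits to the heights `0, …, k` gives `μ_1 U ⋯ μ_{k+1} U`, and
since these cuts fall between blocks `U^b D^k L D`, every `μ_i` is an augmented `(k+1)`-Dyck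
path. Conversely each block of a `μ_i` contains one occurrence and the final `U D^k L` one more.
-/

open Step

theorem List.prefix_append_iff {α : Type*} {p x y : List α} :
    p <+: x ++ y ↔ p <+: x ∨ ∃ q, q <+: y ∧ p = x ++ q := by
  constructor
  · rintro ⟨t, ht⟩
    rcases List.append_eq_append_iff.mp ht with ⟨r, rfl, -⟩ | ⟨q, rfl, rfl⟩
    · exact Or.inl (List.prefix_append p r)
    · exact Or.inr ⟨q, List.prefix_append q t, rfl⟩
  · rintro (h | ⟨q, hq, rfl⟩)
    · exact h.trans (List.prefix_append x y)
    · exact (List.prefix_append_right_inj x).mpr hq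

def stepHeight : Step → ℤ
  | U => 1
  | D => -1
  | L => -1

def height (w : List Step) : ℤ := (w.map stepHeight).sum

@[simp] lemma height_nil : height [] = 0 := rfl

@[simp] lemma height_cons (a : Step) (w : List Step) :
    height (a :: w) = stepHeight a + height w := by
  simp [height]

@[simp] lemma height_append (v w : List Step) : height (v ++ w) = height v + height w := by
  simp [height]

@[simp] lemma height_replicate (n : ℕ) (a : Step) :
    height (List.replicate n a) = n * stepHeight a := by
  simp [height, List.sum_replicate]

@[simp] lemma countU_append (v w : List Step) : countU (v ++ w) = countU v + countU w :=
  List.count_append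

lemma countU_cons (a : Step) (w : List Step) :
    countU (a :: w) = countU w + if a = U then 1 else 0 := by
  simp [countU, List.count_cons]

lemma height_eq_countU_sub (w : List Step) :
    height w = countU w - (countD w + countL w) := by
  induction w with
  | nil => rfl
  | cons a w ih =>
    cases a <;> simp [ih, countU, countD, countL, stepHeight] <;> ring

lemma neg_length_le_height (w : List Step) : -(w.length : ℤ) ≤ height w := by
  induction w with
  | nil => simp
  | cons a w ih => cases a <;> simp [stepHeight] <;> omega

def StaysNonneg (w : List Step) : Prop := ∀ p, p <+: w → 0 ≤ height p

lemma StaysNonneg.of_prefix {v w : List Step} (hw : StaysNonneg w) (hv : v <+: w) :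
    StaysNonneg v :=
  fun p hp => hw p (hp.trans hv)

lemma StaysNonneg.eq_U_of_mem_head? {w : List Step} (hw : StaysNonneg w) {a : Step}
    (ha : a ∈ w.head?) : a = U := by
  cases w with
  | nil => simp at ha
  | cons b t =>
    obtain rfl : b = a := by simpa using ha
    have := hw [b] (List.prefix_cons_iff.mpr (Or.inr ⟨[], rfl, List.nil_prefix⟩))
    cases b <;> simp_all [stepHeight]

lemma staysNonneg_append_iff {v w : List Step} :
    StaysNonneg (v ++ w) ↔ StaysNonneg v ∧ ∀ q, q <+: w → 0 ≤ height v + height q := by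
  simp only [StaysNonneg, List.prefix_append_iff]
  constructor
  · intro h
    refine ⟨fun p hp => h p (Or.inl hp), fun q hq => ?_⟩
    simpa using h (v ++ q) (Or.inr ⟨q, hq, rfl⟩)
  · rintro ⟨hv, hw⟩ p (hp | ⟨q, hq, rfl⟩)
    · exact hv p hp
    · simpa using hw q hq

lemma StaysNonneg.append {v w : List Step} (hv : StaysNonneg v) (hw : StaysNonneg w) :
    StaysNonneg (v ++ w) :=
  staysNonneg_append_iff.mpr ⟨hv, fun q hq => add_nonneg (hv v List.prefix_rfl) (hw q hq)⟩

def Admissible (a b : Step) : Prop := ¬(a = U ∧ b = L) ∧ ¬(a = L ∧ b = U)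

lemma isChain_admissible_iff (w : List Step) :
    w.IsChain Admissible ↔ ¬[U, L] <:+: w ∧ ¬[L, U] <:+: w := by
  rw [List.isChain_iff_forall_rel_of_append_cons_cons]
  constructor
  · rintro h
    refine ⟨fun ⟨s, t, hst⟩ => (h (l₁ := s) (l₂ := t) (by simp [← hst])).1 ⟨rfl, rfl⟩,
      fun ⟨s, t, hst⟩ => (h (l₁ := s) (l₂ := t) (by simp [← hst])).2 ⟨rfl, rfl⟩⟩
  · rintro ⟨hUL, hLU⟩ a b l₁ l₂ rfl
    refine ⟨fun ⟨ha, hb⟩ => hUL ⟨l₁, l₂, by simp [ha, hb]⟩,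
      fun ⟨ha, hb⟩ => hLU ⟨l₁, l₂, by simp [ha, hb]⟩⟩

lemma isSkewDyck_iff (w : List Step) :
    IsSkewDyck w ↔ StaysNonneg w ∧ height w = 0 ∧ w.IsChain Admissible := by
  have hcount : ∀ p, countD p + countL p ≤ countU p ↔ 0 ≤ height p := fun p => by
    rw [height_eq_countU_sub]; omega
  rw [isChain_admissible_iff, IsSkewDyck, height_eq_countU_sub]
  exact and_congr (forall₂_congr fun p _ => hcount p) (and_congr (by omega) Iff.rfl)

section Occurrences

lemma numOccurrences_nil {f : List Step} (hf : f ≠ []) : numOccurrences f [] = 0 := by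
  simp [numOccurrences, List.prefix_nil, hf]

lemma numOccurrences_cons (f : List Step) (a : Step) (w : List Step) :
    numOccurrences f (a :: w) = numOccurrences f w + if f <+: a :: w then 1 else 0 := by
  simp only [numOccurrences, Finset.card_filter, List.length_cons]
  rw [Finset.sum_range_succ' _ (w.length + 1)]
  simp

def boxTail (k : ℕ) : List Step := List.replicate k D ++ [L]

variable {k : ℕ}

@[simp] lemma height_boxTail : height (boxTail k) = -(k + 1) := by
  simp [boxTail, stepHeight]
  ring

lemma boxFactor_eq_U_cons : boxFactor k = U :: boxTail k := rfl

lemma U_not_mem_boxTail : U ∉ boxTail k := by simp [boxTail]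

lemma countU_boxTail : countU (boxTail k) = 0 := List.count_eq_zero.mpr U_not_mem_boxTail

lemma not_boxTail_prefix_U_cons (w : List Step) : ¬ boxTail k <+: U :: w := by
  intro h
  rcases List.prefix_cons_iff.mp h with h | ⟨t, ht, -⟩
  · simp [boxTail] at h
  · exact U_not_mem_boxTail (ht ▸ List.mem_cons_self)

lemma numOccurrences_boxFactor_cons_of_ne {a : Step} (ha : a ≠ U) (w : List Step) :
    numOccurrences (boxFactor k) (a :: w) = numOccurrences (boxFactor k) w := by
  simp [numOccurrences_cons, boxFactor, ha.symm]

lemma numOccurrences_boxFactor_U_cons (w : List Step) :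
    numOccurrences (boxFactor k) (U :: w) =
      numOccurrences (boxFactor k) w + if boxTail k <+: w then 1 else 0 := by
  by_cases h : boxTail k <+: w <;> simp_all [numOccurrences_cons, boxFactor, boxTail]

lemma numOccurrences_boxFactor_append_of_U_not_mem {r : List Step} (hr : U ∉ r)
    (w : List Step) :
    numOccurrences (boxFactor k) (r ++ w) = numOccurrences (boxFactor k) w := by
  induction r with
  | nil => rfl
  | cons a r ih =>
    rw [List.cons_append, numOccurrences_boxFactor_cons_of_ne (by grind), ih (by grind)]

lemma numOccurrences_boxFactor_append (w : List Step) :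
    numOccurrences (boxFactor k) (boxFactor k ++ w) = numOccurrences (boxFactor k) w + 1 := by
  rw [show boxFactor k ++ w = U :: (boxTail k ++ w) from rfl, numOccurrences_boxFactor_U_cons,
    numOccurrences_boxFactor_append_of_U_not_mem U_not_mem_boxTail,
    if_pos (List.prefix_append _ _)]

lemma numOccurrences_boxFactor_replicate_U_append (n : ℕ) (w : List Step) :
    numOccurrences (boxFactor k) (List.replicate (n + 1) U ++ w) =
      numOccurrences (boxFactor k) (U :: w) := by
  induction n with
  | zero => rfl
  | succ n ih =>
    rw [List.replicate_succ, List.cons_append, numOccurrences_boxFactor_U_cons, ih,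
      List.replicate_succ, List.cons_append, if_neg (not_boxTail_prefix_U_cons _), add_zero]

end Occurrences

section BoxForm

variable {k : ℕ}

@[simp] lemma augForm_nil : augForm k [] = [] := rfl

@[simp] lemma augForm_cons (x : ℕ) (b : List ℕ) :
    augForm k (x :: b) = augBlock k x ++ augForm k b := rfl

lemma augForm_append (b c : List ℕ) : augForm k (b ++ c) = augForm k b ++ augForm k c := by
  simp [augForm]

lemma augBlock_succ (x : ℕ) : augBlock k (x + 1) = U :: augBlock k x := rfl

lemma augBlock_one : augBlock (k + 1) 1 = boxFactor k ++ [D] := by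
  simp [augBlock, boxFactor]

lemma boxForm_singleton (x : ℕ) : boxForm k [x] = List.replicate x U ++ boxTail k := by
  simp [boxForm, boxTail]

lemma boxForm_cons_of_ne_nil {v : List ℕ} (hv : v ≠ []) (x : ℕ) :
    boxForm k (x :: v) = augBlock (k + 1) x ++ boxForm k v := by
  obtain ⟨y, v, rfl⟩ := List.exists_cons_of_ne_nil hv
  simp [boxForm, augBlock]

lemma U_cons_boxForm (x : ℕ) (v : List ℕ) :
    U :: boxForm k (x :: v) = boxForm k ((x + 1) :: v) := by
  cases v <;> simp [boxForm, List.replicate_succ]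

lemma boxForm_append_singleton (b : List ℕ) (a : ℕ) :
    boxForm k (b ++ [a]) = augForm (k + 1) b ++ (List.replicate a U ++ boxTail k) := by
  induction b with
  | nil => exact boxForm_singleton a
  | cons x b ih => simp [boxForm_cons_of_ne_nil, ih]

end BoxForm

section Counting

variable {k : ℕ}

lemma not_LU_infix_of_suffix {v w : List Step} (hw : ¬[L, U] <:+: w) (hv : v <:+ w) :
    ¬[L, U] <:+: v :=
  fun h => hw (h.trans hv.isInfix)

lemma cases_of_not_LU_infix {w : List Step} (hw : ¬[L, U] <:+: w) :
    w = [] ∨ (∃ a t, a ≠ U ∧ w = a :: t) ∨ (∃ t, ¬boxTail k <+: t ∧ w = U :: t) ∨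
      w = boxFactor k ∨ ∃ x t, x ≠ U ∧ w = boxFactor k ++ x :: t := by
  rcases w with _ | ⟨a, t⟩
  · exact Or.inl rfl
  by_cases ha : a = U
  swap
  · exact Or.inr (Or.inl ⟨a, t, ha, rfl⟩)
  subst ha
  by_cases ht : boxTail k <+: t
  swap
  · exact Or.inr (Or.inr (Or.inl ⟨t, ht, rfl⟩))
  obtain ⟨t', rfl⟩ := ht
  rcases t' with _ | ⟨x, t''⟩
  · exact Or.inr (Or.inr (Or.inr (Or.inl (by simp [boxFactor, boxTail]))))
  refine Or.inr (Or.inr (Or.inr (Or.inr ⟨x, t'', ?_, rfl⟩)))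
  rintro rfl
  exact hw ⟨U :: List.replicate k D, t'', by simp [boxTail]⟩

lemma countD_add_countL_cons_of_ne {x : Step} (hx : x ≠ U) (t : List Step) :
    countD (x :: t) + countL (x :: t) = countD t + countL t + 1 := by
  cases x <;> simp_all [countD, countL] <;> omega

@[simp] lemma countD_add_countL_boxFactor_append (w : List Step) :
    countD (boxFactor k ++ w) + countL (boxFactor k ++ w) = countD w + countL w + (k + 1) := by
  simp [countD, countL, boxFactor, List.count_replicate]
  omega

lemma numOccurrences_boxFactor_self : numOccurrences (boxFactor k) (boxFactor k) = 1 := by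
  simpa [numOccurrences_nil, boxFactor] using numOccurrences_boxFactor_append (k := k) []

lemma numOccurrences_boxFactor_append_cons {x : Step} (hx : x ≠ U) (t : List Step) :
    numOccurrences (boxFactor k) (boxFactor k ++ x :: t) = numOccurrences (boxFactor k) t + 1 := by
  rw [numOccurrences_boxFactor_append, numOccurrences_boxFactor_cons_of_ne hx]

theorem mul_numOccurrences_boxFactor_le (w : List Step) (hw : ¬[L, U] <:+: w) :
    (k + 2) * numOccurrences (boxFactor k) w ≤ countD w + countL w + 1 := by
  induction' hn : w.length using Nat.strong_induction_on with n ih generalizing w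
  subst hn
  rcases cases_of_not_LU_infix (k := k) hw with
    rfl | ⟨a, t, ha, rfl⟩ | ⟨t, ht, rfl⟩ | rfl | ⟨x, t, hx, rfl⟩
  · simp [numOccurrences_nil, boxFactor]
  · have := ih _ (by simp) t (not_LU_infix_of_suffix hw (List.suffix_cons a t)) rfl
    rw [numOccurrences_boxFactor_cons_of_ne ha, countD_add_countL_cons_of_ne ha]
    omega
  · have := ih _ (by simp) t (not_LU_infix_of_suffix hw (List.suffix_cons U t)) rfl
    rw [numOccurrences_boxFactor_U_cons, if_neg ht]
    simpa [countD, countL] using this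
  · rw [numOccurrences_boxFactor_self, ← List.append_nil (boxFactor k),
      countD_add_countL_boxFactor_append]
    simp
  · have := ih _ (by simp; omega) t
      (not_LU_infix_of_suffix hw ((List.suffix_cons x t).trans (List.suffix_append _ _))) rfl
    rw [numOccurrences_boxFactor_append_cons hx, countD_add_countL_boxFactor_append,
      countD_add_countL_cons_of_ne hx]
    linarith

theorem exists_eq_boxForm_of_mul_numOccurrences_eq (w : List Step) (hw : ¬[L, U] <:+: w)
    (htight : (k + 2) * numOccurrences (boxFactor k) w = countD w + countL w + 1) :
    ∃ u, u ≠ [] ∧ (∀ x ∈ u, 0 < x) ∧ w = boxForm k u := by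
  induction' hn : w.length using Nat.strong_induction_on with n ih generalizing w
  subst hn
  rcases cases_of_not_LU_infix (k := k) hw with
    rfl | ⟨a, t, ha, rfl⟩ | ⟨t, ht, rfl⟩ | rfl | ⟨x, t, hx, rfl⟩
  · simp [numOccurrences_nil, boxFactor] at htight
  · have := mul_numOccurrences_boxFactor_le (k := k) t
      (not_LU_infix_of_suffix hw (List.suffix_cons a t))
    rw [numOccurrences_boxFactor_cons_of_ne ha, countD_add_countL_cons_of_ne ha] at htight
    omega
  · rw [numOccurrences_boxFactor_U_cons, if_neg ht] at htight
    obtain ⟨u, hu, hpos, rfl⟩ := ih _ (by simp) t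
      (not_LU_infix_of_suffix hw (List.suffix_cons U t)) (by simpa [countD, countL] using htight)
      rfl
    obtain ⟨c, v, rfl⟩ := List.exists_cons_of_ne_nil hu
    exact ⟨(c + 1) :: v, by simp, by simp_all, U_cons_boxForm c v⟩
  · exact ⟨[1], by simp, by simp, by simp [boxForm, boxFactor]⟩
  · have hLU : ¬[L, U] <:+: t :=
      not_LU_infix_of_suffix hw ((List.suffix_cons x t).trans (List.suffix_append _ _))
    rw [numOccurrences_boxFactor_append_cons hx, countD_add_countL_boxFactor_append,
      countD_add_countL_cons_of_ne hx] at htight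
    obtain ⟨u, hu, hpos, rfl⟩ := ih _ (by simp; omega) t hLU (by linarith) rfl
    obtain ⟨c, v, rfl⟩ := List.exists_cons_of_ne_nil hu
    obtain ⟨c, rfl⟩ : ∃ c', c = c' + 1 := ⟨c - 1, by have := hpos c List.mem_cons_self; omega⟩
    have hxD : x = D := by
      rw [← U_cons_boxForm] at hw
      cases x
      · exact absurd rfl hx
      · rfl
      · exact absurd ⟨boxFactor k, boxForm k (c :: v), by simp⟩ hw
    refine ⟨1 :: (c + 1) :: v, by simp, by simp_all, ?_⟩
    rw [boxForm_cons_of_ne_nil (v := (c + 1) :: v) (by simp), augBlock_one, hxD]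
    simp

end Counting

section Ballot

variable {k : ℕ}

lemma height_augBlock (x : ℕ) : height (augBlock (k + 1) x) = x - (k + 2) := by
  simp [augBlock, stepHeight]
  ring

lemma height_augForm (b : List ℕ) : height (augForm (k + 1) b) = b.sum - (k + 2) * b.length := by
  induction b with
  | nil => simp
  | cons x b ih =>
    simp only [augForm_cons, height_append, height_augBlock, ih, List.sum_cons,
      List.length_cons]
    push_cast
    ring

lemma augForm_prefix_augForm {c b : List ℕ} (h : c <+: b) : augForm k c <+: augForm k b := by
  obtain ⟨t, rfl⟩ := h
  rw [augForm_append]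
  exact List.prefix_append _ _

lemma height_nonneg_or_le_of_prefix_augBlock {q : List Step} {x : ℕ}
    (hq : q <+: augBlock (k + 1) x) : 0 ≤ height q ∨ height (augBlock (k + 1) x) ≤ height q := by
  have hblock : augBlock (k + 1) x = List.replicate x U ++ (List.replicate k D ++ [L, D]) := by
    simp [augBlock]
  rw [hblock] at hq
  rcases List.prefix_append_iff.mp hq with hq | ⟨r, hr, rfl⟩
  · rw [(List.prefix_replicate_iff.mp hq).2]
    simp [stepHeight]
  · right
    have := hr.length_le
    have := neg_length_le_height r
    simp only [List.length_append, List.length_replicate, List.length_cons,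
      List.length_nil] at *
    rw [height_augBlock]
    simp [stepHeight]
    omega

lemma exists_prefix_height_augForm_le {p : List Step} {b : List ℕ}
    (hp : p <+: augForm (k + 1) b) : ∃ c, c <+: b ∧ height (augForm (k + 1) c) ≤ height p := by
  induction b generalizing p with
  | nil => exact ⟨[], List.prefix_rfl, by simp [List.prefix_nil.mp hp]⟩
  | cons x b ih =>
    rcases List.prefix_append_iff.mp hp with hp | ⟨q, hq, rfl⟩
    · rcases height_nonneg_or_le_of_prefix_augBlock hp with h | h
      · exact ⟨[], List.nil_prefix, by simpa using h⟩
      · exact ⟨[x], by simp, by simpa using h⟩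
    · obtain ⟨c, hc, hle⟩ := ih hq
      exact ⟨x :: c, List.cons_prefix_cons.mpr ⟨rfl, hc⟩, by simpa using hle⟩

def IsBallot (k : ℕ) (b : List ℕ) : Prop := ∀ c, c <+: b → (k + 2) * c.length ≤ c.sum

lemma IsBallot.of_prefix {c b : List ℕ} (hb : IsBallot k b) (hc : c <+: b) : IsBallot k c :=
  fun d hd => hb d (hd.trans hc)

lemma staysNonneg_augForm_iff (b : List ℕ) :
    StaysNonneg (augForm (k + 1) b) ↔ IsBallot k b := by
  have key : ∀ c : List ℕ,
      0 ≤ height (augForm (k + 1) c) ↔ (k + 2) * c.length ≤ c.sum := fun c => by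
    rw [height_augForm, sub_nonneg]
    exact_mod_cast Iff.rfl
  constructor
  · exact fun h c hc => (key c).mp (h _ (augForm_prefix_augForm hc))
  · intro h p hp
    obtain ⟨c, hc, hle⟩ := exists_prefix_height_augForm_le hp
    exact ((key c).mpr (h c hc)).trans hle

end Ballot

/-- `joinU [μ₁, …, μₘ] = μ₁ U μ₂ U ⋯ μₘ U`. -/
def joinU (l : List (List Step)) : List Step := (l.map (· ++ [U])).flatten

@[simp] lemma joinU_nil : joinU [] = [] := rfl

@[simp] lemma joinU_cons (m : List Step) (l : List (List Step)) :
    joinU (m :: l) = m ++ U :: joinU l := by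
  simp [joinU]

section Decomposition

variable {k : ℕ}

lemma exists_longest_balanced_prefix {b : List ℕ} (hb : IsBallot k b) :
    ∃ c, c <+: b ∧ c.sum = (k + 2) * c.length ∧
      ∀ p, p <+: b → c.length < p.length → (k + 2) * p.length < p.sum := by
  let P i := (b.take i).sum = (k + 2) * i
  have hs_le : Nat.findGreatest P b.length ≤ b.length := Nat.findGreatest_le _
  refine ⟨b.take (Nat.findGreatest P b.length), List.take_prefix _ _, ?_, ?_⟩
  · rw [List.length_take_of_le hs_le]
    exact Nat.findGreatest_spec (P := P) (Nat.zero_le _) (by simp [P])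
  · intro p hp hlt
    rw [List.length_take_of_le hs_le] at hlt
    have hne := Nat.findGreatest_is_greatest hlt hp.length_le
    simp only [P, ← List.prefix_iff_eq_take.mp hp] at hne
    exact lt_of_le_of_ne (hb p hp) (Ne.symm hne)

/-- Cutting `U^{b_1} D^k L D ⋯ U^{b_m} D^k L D U^a` after its last visit to the starting level:
afterwards the path stays strictly above that level, so removing the next `U` keeps it a
ballot path. -/
lemma exists_split_at_last_return {b : List ℕ} {a j : ℕ} (hpos : ∀ x ∈ b, 0 < x)
    (hb : IsBallot k b) (ha : 0 < a) (hsum : b.sum + a = (k + 2) * b.length + (j + 2)) :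
    ∃ c b' a', ((∀ x ∈ c, 0 < x) ∧ IsBallot k c ∧ c.sum = (k + 2) * c.length) ∧
      (∀ x ∈ b', 0 < x) ∧ IsBallot k b' ∧ 0 < a' ∧
      b'.sum + a' = (k + 2) * b'.length + (j + 1) ∧
      augForm (k + 1) b ++ List.replicate a U =
        augForm (k + 1) c ++ U :: (augForm (k + 1) b' ++ List.replicate a' U) := by
  obtain ⟨c, ⟨t, rfl⟩, hc_eq, hc_gt⟩ := exists_longest_balanced_prefix hb
  have hc : (∀ x ∈ c, 0 < x) ∧ IsBallot k c ∧ c.sum = (k + 2) * c.length :=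
    ⟨fun x hx => hpos x (List.mem_append_left _ hx), hb.of_prefix (List.prefix_append _ _), hc_eq⟩
  rcases t with _ | ⟨x, rest⟩
  · simp only [List.append_nil] at hsum ⊢
    obtain rfl : a = (j + 1) + 1 := by omega
    refine ⟨c, [], j + 1, hc, by simp, fun d hd => by simp [List.prefix_nil.mp hd], by omega,
      by simp, ?_⟩
    simp [List.replicate_succ]
  · have hgt : ∀ q, q <+: rest → (k + 2) * (q.length + 1) < x + q.sum := by
      intro q hq
      have := hc_gt (c ++ x :: q)
        ((List.prefix_append_right_inj c).mpr (List.cons_prefix_cons.mpr ⟨rfl, hq⟩)) (by simp)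
      simp only [List.length_append, List.length_cons, List.sum_append, List.sum_cons, hc_eq,
        mul_add, mul_one] at this ⊢
      omega
    have hx := hgt [] List.nil_prefix
    simp only [List.length_nil, List.sum_nil, add_zero] at hx
    obtain ⟨y, rfl⟩ : ∃ y, x = y + 1 := ⟨x - 1, by omega⟩
    refine ⟨c, y :: rest, a, hc, ?_, ?_, ha, ?_, ?_⟩
    · intro z hz
      rcases List.mem_cons.mp hz with rfl | hz
      · omega
      · exact hpos z (List.mem_append_right _ (List.mem_cons_of_mem _ hz))
    · intro p hp
      rcases List.prefix_cons_iff.mp hp with rfl | ⟨q, rfl, hq⟩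
      · simp
      · have := hgt q hq
        simp only [List.length_cons, List.sum_cons]
        omega
    · simp only [List.sum_append, List.sum_cons, List.length_append, List.length_cons, hc_eq,
        mul_add] at hsum ⊢
      omega
    · simp [augForm_append, augBlock_succ]

theorem exists_decomposition :
    ∀ (j : ℕ) {b : List ℕ} {a : ℕ}, (∀ x ∈ b, 0 < x) → IsBallot k b → 0 < a →
      b.sum + a = (k + 2) * b.length + (j + 1) →
      ∃ c : Fin (j + 1) → List ℕ,
        (∀ i, (∀ x ∈ c i, 0 < x) ∧ IsBallot k (c i) ∧ (c i).sum = (k + 2) * (c i).length) ∧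
        augForm (k + 1) b ++ List.replicate a U =
          joinU (List.ofFn fun i => augForm (k + 1) (c i))
  | 0, b, a, hpos, hb, ha, hsum => by
    have := hb b List.prefix_rfl
    obtain rfl : a = 1 := by omega
    have hbal : b.sum = (k + 2) * b.length := by omega
    exact ⟨fun _ => b, fun _ => ⟨hpos, hb, hbal⟩, by simp⟩
  | j + 1, b, a, hpos, hb, ha, hsum => by
    obtain ⟨c, b', a', hc, hpos', hb', ha', hsum', heq⟩ :=
      exists_split_at_last_return hpos hb ha hsum
    obtain ⟨c', hc', heq'⟩ := exists_decomposition j hpos' hb' ha' hsum'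
    refine ⟨Fin.cons c c', Fin.forall_fin_succ.mpr ⟨by simpa using hc, by simpa using hc'⟩, ?_⟩
    rw [heq, heq', List.ofFn_succ]
    simp

end Decomposition

section Forward

variable {k : ℕ}

lemma isAugmented_augForm {c : List ℕ} (hpos : ∀ x ∈ c, 0 < x) (hc : IsBallot k c)
    (hbal : c.sum = (k + 2) * c.length) (hchain : (augForm (k + 1) c).IsChain Admissible) :
    IsAugmented (k + 1) (augForm (k + 1) c) := by
  refine ⟨(isSkewDyck_iff _).mpr ⟨(staysNonneg_augForm_iff c).mpr hc, ?_, hchain⟩, c, hpos, rfl⟩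
  rw [height_augForm, hbal]
  push_cast
  ring

lemma infix_joinU {m : List Step} {l : List (List Step)} (h : m ∈ l) : m <:+: joinU l :=
  (List.prefix_append m [U]).isInfix.trans (List.infix_of_mem_flatten (List.mem_map_of_mem h))

theorem exists_joinU_of_isBoxPath {n : ℕ} {w : List Step} (hn : 1 ≤ n) (hw : IsBoxPath k n w) :
    ∃ μ : Fin (k + 1) → List Step, (∀ i, IsAugmented (k + 1) (μ i)) ∧
      w = joinU (List.ofFn μ) ++ boxTail k := by
  obtain ⟨hskew, hsemi, hocc⟩ := hw
  obtain ⟨hnonneg, hheight, hchain⟩ := (isSkewDyck_iff w).mp hskew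
  have htight : (k + 2) * numOccurrences (boxFactor k) w = countD w + countL w + 1 := by
    have : 1 ≤ (k + 2) * n := Nat.one_le_iff_ne_zero.mpr (by positivity)
    rw [hocc, ← hskew.2.1]
    rw [semilength] at hsemi
    omega
  obtain ⟨u, hu, hpos, rfl⟩ := exists_eq_boxForm_of_mul_numOccurrences_eq w
    ((isChain_admissible_iff w).mp hchain).2 htight
  obtain ⟨b, a, rfl⟩ := (List.eq_nil_or_concat u).resolve_left hu
  rw [List.concat_eq_append, boxForm_append_singleton] at hnonneg hheight hchain ⊢
  rw [List.concat_eq_append] at hpos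
  have hb : IsBallot k b :=
    (staysNonneg_augForm_iff b).mp (hnonneg.of_prefix (List.prefix_append _ _))
  have hsum : b.sum + a = (k + 2) * b.length + (k + 1) := by
    rw [height_append, height_append, height_augForm, height_replicate, height_boxTail] at hheight
    simp only [stepHeight] at hheight
    have : (b.sum : ℤ) + a = (k + 2) * b.length + (k + 1) := by linarith
    exact_mod_cast this
  obtain ⟨c, hc, heq⟩ :=
    exists_decomposition k (fun x hx => hpos x (by simp [hx])) hb (hpos a (by simp)) hsum
  rw [← List.append_assoc, heq] at hchain ⊢
  refine ⟨fun i => augForm (k + 1) (c i), fun i => isAugmented_augForm (hc i).1 (hc i).2.1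
    (hc i).2.2 (hchain.infix ((infix_joinU ?_).trans (List.infix_append [] _ _))), rfl⟩
  exact List.mem_ofFn.mpr ⟨i, rfl⟩

end Forward

section Reverse

variable {k : ℕ}

lemma countU_augForm (b : List ℕ) : countU (augForm k b) = b.sum := by
  induction b with
  | nil => rfl
  | cons x b ih => simp_all [countU, augBlock, List.count_replicate]

lemma countL_augForm (b : List ℕ) : countL (augForm k b) = b.length := by
  induction b with
  | nil => rfl
  | cons x b ih => simp_all [countL, augBlock, List.count_replicate]

lemma eq_D_of_mem_getLast?_augForm (b : List ℕ) {a : Step}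
    (ha : a ∈ (augForm k b).getLast?) : a = D := by
  induction b with
  | nil => simp at ha
  | cons x b ih =>
    rw [augForm_cons, List.getLast?_append] at ha
    rcases h : (augForm k b).getLast? with _ | d
    · simp_all [augBlock]
    · simp_all

lemma numOccurrences_augForm_append {b : List ℕ} (hb : ∀ x ∈ b, 0 < x) (z : List Step) :
    numOccurrences (boxFactor k) (augForm (k + 1) b ++ z) =
      b.length + numOccurrences (boxFactor k) z := by
  induction b with
  | nil => simp
  | cons x b ih =>
    obtain ⟨y, rfl⟩ : ∃ y, x = y + 1 := ⟨x - 1, by have := hb x (by simp); omega⟩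
    have hblock : augBlock (k + 1) (y + 1) ++ augForm (k + 1) b ++ z =
        List.replicate (y + 1) U ++ (boxTail k ++ D :: (augForm (k + 1) b ++ z)) := by
      simp [augBlock, boxTail]
    rw [augForm_cons, hblock, numOccurrences_boxFactor_replicate_U_append,
      ← List.cons_append, ← boxFactor_eq_U_cons, numOccurrences_boxFactor_append,
      numOccurrences_boxFactor_cons_of_ne (by simp), ih (fun x hx => hb x (by simp [hx]))]
    simp
    omega

lemma IsAugmented.countU_eq {m : List Step} (hm : IsAugmented (k + 1) m) :
    countU m = (k + 2) * countL m := by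
  obtain ⟨hskew, b, -, rfl⟩ := hm
  have := ((isSkewDyck_iff _).mp hskew).2.1
  rw [height_augForm, sub_eq_zero] at this
  rw [countU_augForm, countL_augForm]
  exact_mod_cast this

lemma IsAugmented.numOccurrences_append {m : List Step} (hm : IsAugmented (k + 1) m)
    (z : List Step) :
    numOccurrences (boxFactor k) (m ++ z) = countL m + numOccurrences (boxFactor k) z := by
  obtain ⟨-, b, hb, rfl⟩ := hm
  rw [numOccurrences_augForm_append hb, countL_augForm]

lemma exists_joinU_cons_append_eq_U_cons {m : List Step} (hm : StaysNonneg m)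
    (l : List (List Step)) (z : List Step) : ∃ v, joinU (m :: l) ++ z = U :: v := by
  rcases m with _ | ⟨a, t⟩
  · exact ⟨_, rfl⟩
  · obtain rfl := hm.eq_U_of_mem_head? (a := a) rfl
    exact ⟨_, rfl⟩

lemma numOccurrences_joinU_cons_append_boxTail (m : List Step) (l : List (List Step))
    (hl : ∀ m' ∈ m :: l, IsAugmented (k + 1) m') :
    numOccurrences (boxFactor k) (joinU (m :: l) ++ boxTail k) =
      ((m :: l).map countL).sum + 1 := by
  induction l generalizing m with
  | nil =>
    rw [joinU_cons, joinU_nil, List.append_assoc, List.cons_append, List.nil_append,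
      (hl m (by simp)).numOccurrences_append]
    rw [← boxFactor_eq_U_cons, numOccurrences_boxFactor_self]
    simp
  | cons m' l ih =>
    obtain ⟨v, hv⟩ := exists_joinU_cons_append_eq_U_cons
      ((isSkewDyck_iff _).mp (hl m' (by simp)).1).1 l (boxTail k)
    rw [joinU_cons, List.append_assoc, List.cons_append,
      (hl m (by simp)).numOccurrences_append, numOccurrences_boxFactor_U_cons,
      ih m' (fun m'' hm'' => hl m'' (List.mem_cons_of_mem _ hm'')), hv,
      if_neg (not_boxTail_prefix_U_cons v)]
    simp
    omega

lemma countU_joinU (l : List (List Step)) :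
    countU (joinU l) = (l.map countU).sum + l.length := by
  induction l with
  | nil => rfl
  | cons m l ih =>
    rw [joinU_cons, countU_append, countU_cons, ih]
    simp
    omega

lemma height_joinU {l : List (List Step)} (hl : ∀ m ∈ l, height m = 0) :
    height (joinU l) = l.length := by
  induction l with
  | nil => rfl
  | cons m l ih =>
    simp [hl m (by simp), ih (fun m' hm' => hl m' (List.mem_cons_of_mem _ hm')), stepHeight]
    ring

lemma staysNonneg_joinU {l : List (List Step)} (hl : ∀ m ∈ l, StaysNonneg m) :
    StaysNonneg (joinU l) := by
  induction l with
  | nil => simp [StaysNonneg, List.prefix_nil]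
  | cons m l ih =>
    rw [joinU_cons, ← List.singleton_append]
    refine (hl m (by simp)).append (StaysNonneg.append ?_
      (ih (fun m' hm' => hl m' (List.mem_cons_of_mem _ hm'))))
    intro p hp
    rcases List.prefix_cons_iff.mp hp with rfl | ⟨t, rfl, ht⟩
    · simp
    · simp [List.prefix_nil.mp ht, stepHeight]

lemma admissible_D (b : Step) : Admissible D b := by simp [Admissible]

lemma isChain_boxTail (k : ℕ) : (boxTail k).IsChain Admissible := by
  induction k with
  | zero => simp [boxTail]
  | succ k ih =>
    rw [boxTail, List.replicate_succ, List.cons_append, List.isChain_cons]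
    exact ⟨fun b _ => admissible_D b, ih⟩

lemma isChain_joinU_append_boxTail (hk : 1 ≤ k) {l : List (List Step)}
    (hl : ∀ m ∈ l, IsAugmented (k + 1) m) : (joinU l ++ boxTail k).IsChain Admissible := by
  induction l with
  | nil => exact isChain_boxTail k
  | cons m l ih =>
    have hl' : ∀ m' ∈ l, IsAugmented (k + 1) m' :=
      fun m' hm' => hl m' (List.mem_cons_of_mem _ hm')
    obtain ⟨hskew, b, -, rfl⟩ := hl m (by simp)
    have hnext : ∀ y ∈ (joinU l ++ boxTail k).head?, Admissible U y := by
      intro y hy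
      rcases l with _ | ⟨m', l⟩
      · obtain ⟨k, rfl⟩ := Nat.exists_eq_add_of_le' hk
        simp [boxTail, List.replicate_succ] at hy
        simp [Admissible, ← hy]
      · obtain ⟨v, hv⟩ := exists_joinU_cons_append_eq_U_cons
          ((isSkewDyck_iff _).mp (hl' m' (by simp)).1).1 l (boxTail k)
        rw [hv] at hy
        simp [Admissible, (Option.mem_some_iff.mp hy).symm]
    rw [joinU_cons, List.append_assoc, List.cons_append, List.isChain_append]
    refine ⟨((isSkewDyck_iff _).mp hskew).2.2, List.isChain_cons.mpr ⟨hnext, ih hl'⟩, ?_⟩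
    intro x hx y _
    rw [eq_D_of_mem_getLast?_augForm b hx]
    exact admissible_D y

theorem isBoxPath_joinU_append_boxTail (hk : 1 ≤ k) {l : List (List Step)}
    (hl : ∀ m ∈ l, IsAugmented (k + 1) m) (hlen : l.length = k + 1) :
    IsBoxPath k ((l.map countL).sum + 1) (joinU l ++ boxTail k) := by
  have hparts : ∀ m ∈ l, StaysNonneg m ∧ height m = 0 ∧ m.IsChain Admissible :=
    fun m hm => (isSkewDyck_iff m).mp (hl m hm).1
  have hheight : height (joinU l) = k + 1 := by
    rw [height_joinU fun m hm => (hparts m hm).2.1, hlen]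
    push_cast
    ring
  refine ⟨(isSkewDyck_iff _).mpr ⟨?_, by simp [hheight], isChain_joinU_append_boxTail hk hl⟩,
    ?_, ?_⟩
  · refine staysNonneg_append_iff.mpr ⟨staysNonneg_joinU fun m hm => (hparts m hm).1, ?_⟩
    intro q hq
    have := hq.length_le
    have := neg_length_le_height q
    simp only [boxTail, List.length_append, List.length_replicate, List.length_singleton] at *
    omega
  · have hU : (l.map countU).sum = (k + 2) * (l.map countL).sum := by
      rw [← List.sum_map_mul_left]
      exact congrArg List.sum (List.map_congr_left fun m hm => (hl m hm).countU_eq)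
    rw [semilength, countU_append, countU_joinU, hU, hlen, countU_boxTail, Nat.mul_succ]
    omega
  · obtain ⟨m, l, rfl⟩ := List.exists_cons_of_ne_nil (List.ne_nil_of_length_eq_add_one hlen)
    exact numOccurrences_joinU_cons_append_boxTail m l hl

end Reverse

lemma joinU_append_boxTail (l : List (List Step)) (k : ℕ) :
    (l.map fun m => m ++ [U]).flatten ++ List.replicate k D ++ [L] = joinU l ++ boxTail k := by
  simp [joinU, boxTail]

/-- A word is a `k`-box path (of some size `n ≥ 1`) iff it decomposes as
`μ_1 U μ_2 U ⋯ μ_{k+1} U D^k L` with each `μ_i` an augmented `(k+1)`-Dyck path. -/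
theorem statement2 (k : ℕ) (hk : 1 ≤ k) (w : List Step) :
    (∃ n, 1 ≤ n ∧ IsBoxPath k n w) ↔
    (∃ μ : Fin (k+1) → List Step, (∀ i, IsAugmented (k+1) (μ i)) ∧
      w = ((List.ofFn μ).map (fun m => m ++ [Step.U])).flatten ++
            List.replicate k Step.D ++ [Step.L]) := by
  simp only [joinU_append_boxTail]
  constructor
  · rintro ⟨n, hn, hw⟩
    exact exists_joinU_of_isBoxPath hn hw
  · rintro ⟨μ, hμ, rfl⟩
    refine ⟨_, Nat.le_add_left 1 _, isBoxPath_joinU_append_boxTail hk ?_ (List.length_ofFn)⟩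
    intro m hm
    obtain ⟨i, rfl⟩ := List.mem_ofFn.mp hm
    exact hμ i
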